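/- Let X ≠ 0 and L be finite-dimensional ℚ-vector spaces, let M_0, M_1, M ∈ A, and suppose there is an exact sequence 0 → M_0 ⊗_ℚ X → M → M_1 ⊗_ℚ L → 0 in A. Let M̃ be the pushout of the exact sequence 0 → M_0 ⊗_ℚ X ⊗_ℚ X^∨ → M ⊗_ℚ X^∨ → M_1 ⊗_ℚ L ⊗_ℚ X^∨ → 0 along the map M_0 ⊗_ℚ X ⊗_ℚ X^∨ → M_0 induced by the trace tr : Hom(X, X) ≅ X ⊗ X^∨ → ℚ, so that M̃ fits into an exact sequence 0 → M_0 → M̃ → M_1 ⊗_ℚ Hom(X, L) → 0. Then P(M) = P(M̃) as subspaces of P(A). -/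

import Mathlib

set_option maxHeartbeats 1000000
set_option synthInstance.maxHeartbeats 400000

open CategoryTheory CategoryTheory.Limits Module TensorProduct

universe v u

attribute [local instance] CategoryTheory.Abelian.hasFiniteBiproducts

/-- A fiber functor on a `ℚ`-linear Abelian category, defined over a field `F ⊇ ℚ`:
a `ℚ`-linear, exact, faithful functor into finite-dimensional `F`-vector spaces. -/
structure FiberFunctor (A : Type u) [Category.{v} A] [Abelian A] [CategoryTheory.Linear ℚ A]
    (F : Type) [Field F] [Algebra ℚ F] where
  H : A ⥤ ModuleCat.{0} F
  additive : H.Additive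
  linear : ∀ (q : ℚ) {M N : A} (f : M ⟶ N), H.map (q • f) = (algebraMap ℚ F q) • H.map f
  exact_left : Limits.PreservesFiniteLimits H
  exact_right : Limits.PreservesFiniteColimits H
  faithful : H.Faithful
  finDim : ∀ M : A, FiniteDimensional F (H.obj M)

variable (A : Type u) [Category.{v} A] [Abelian A] [CategoryTheory.Linear ℚ A]
variable (K : Subfield ℂ)
variable (HB : FiberFunctor A ℚ) (HdR : FiberFunctor A ↥K)

/-- The index type of the free module on symbols `(M, σ, ω)`. -/
abbrev PIdx := Σ M : A, (HB.H.obj M) × Module.Dual ↥K (HdR.H.obj M)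

/-- The free `K`-module on symbols `(M, σ, ω)`. -/
abbrev FreeMod := PIdx A K HB HdR →₀ ↥K

/-- Generators of the relations defining `P(A)` as a quotient of the free `K`-module on
symbols `(σ ⊗ ω)_M`: bilinearity relations (making the quotient by them the direct sum
`⊕_M H_B(M) ⊗_ℚ H_dR(M)^∨`) together with the period relations
`(σ ⊗ α^∨(ω))_M = (α(σ) ⊗ ω)_N` for morphisms `α : M ⟶ N`. -/
def RelGen (x : FreeMod A K HB HdR) : Prop :=
  (∃ (M : A) (σ σ' : HB.H.obj M) (ω : Module.Dual ↥K (HdR.H.obj M)),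
      x = Finsupp.single ⟨M, (σ + σ', ω)⟩ 1 - Finsupp.single ⟨M, (σ, ω)⟩ 1
            - Finsupp.single ⟨M, (σ', ω)⟩ 1) ∨
  (∃ (M : A) (σ : HB.H.obj M) (ω ω' : Module.Dual ↥K (HdR.H.obj M)),
      x = Finsupp.single ⟨M, (σ, ω + ω')⟩ 1 - Finsupp.single ⟨M, (σ, ω)⟩ 1
            - Finsupp.single ⟨M, (σ, ω')⟩ 1) ∨
  (∃ (M : A) (q : ℚ) (σ : HB.H.obj M) (ω : Module.Dual ↥K (HdR.H.obj M)),
      x = Finsupp.single ⟨M, (q • σ, ω)⟩ 1 - Finsupp.single ⟨M, (σ, ω)⟩ (algebraMap ℚ ↥K q)) ∨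
  (∃ (M : A) (c : ↥K) (σ : HB.H.obj M) (ω : Module.Dual ↥K (HdR.H.obj M)),
      x = Finsupp.single ⟨M, (σ, c • ω)⟩ 1 - Finsupp.single ⟨M, (σ, ω)⟩ c) ∨
  (∃ (M N : A) (α : M ⟶ N) (σ : HB.H.obj M) (ω : Module.Dual ↥K (HdR.H.obj N)),
      x = Finsupp.single ⟨M, (σ, ω.comp (HdR.H.map α).hom)⟩ 1
            - Finsupp.single ⟨N, (HB.H.map α σ, ω)⟩ 1)

/-- The submodule of relations defining `P(A)`. -/
noncomputable def PRel : Submodule ↥K (FreeMod A K HB HdR) :=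
  Submodule.span ↥K {x | RelGen A K HB HdR x}

/-- The space of formal periods `P(A)`. -/
abbrev PA := FreeMod A K HB HdR ⧸ PRel A K HB HdR

/-- The class of the formal period `(σ ⊗ ω)_M` in `P(A)`. -/
noncomputable def per (M : A) (σ : HB.H.obj M) (ω : Module.Dual ↥K (HdR.H.obj M)) :
    PA A K HB HdR :=
  Submodule.Quotient.mk (Finsupp.single ⟨M, (σ, ω)⟩ 1)

/-- `P(M)`: the image of `H_B(M) ⊗_ℚ H_dR(M)^∨` in `P(A)`. -/
noncomputable def PM (M : A) : Submodule ↥K (PA A K HB HdR) :=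
  Submodule.span ↥K {x | ∃ σ ω, x = per A K HB HdR M σ ω}

/-- The `m`-th power `M^m` of an object. -/
noncomputable abbrev pow (M : A) (m : ℕ) : A := ⨁ (fun _ : Fin m => M)

/-- The free `K`-module on symbols `σ ⊗ ω` for a single object `M`,
of which `H_B(M) ⊗_ℚ H_dR(M)^∨` is the quotient by the bilinearity relations. -/
abbrev FreeModM (M : A) := ((HB.H.obj M) × Module.Dual ↥K (HdR.H.obj M)) →₀ ↥K

/-- Generators of the relations defining `P^k(M)` (`k ∈ ℕ ∪ {∞}`, encoded as `k : ℕ∞`):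
bilinearity relations together with the depth `≤ k` relations `∑_{i=1}^m σ_i ⊗ ω_i = 0`
for every exact sequence `0 → N' → M^m → N → 0` with `m ≤ k`, `(σ_i) ∈ H_B(N')` and
`(ω_i) ∈ H_dR(N)^∨`. -/
def RelGenDepth (M : A) (k : ℕ∞) (x : FreeModM A K HB HdR M) : Prop :=
  (∃ (σ σ' : HB.H.obj M) (ω : Module.Dual ↥K (HdR.H.obj M)),
      x = Finsupp.single (σ + σ', ω) 1 - Finsupp.single (σ, ω) 1 - Finsupp.single (σ', ω) 1) ∨
  (∃ (σ : HB.H.obj M) (ω ω' : Module.Dual ↥K (HdR.H.obj M)),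
      x = Finsupp.single (σ, ω + ω') 1 - Finsupp.single (σ, ω) 1 - Finsupp.single (σ, ω') 1) ∨
  (∃ (q : ℚ) (σ : HB.H.obj M) (ω : Module.Dual ↥K (HdR.H.obj M)),
      x = Finsupp.single (q • σ, ω) 1 - Finsupp.single (σ, ω) (algebraMap ℚ ↥K q)) ∨
  (∃ (c : ↥K) (σ : HB.H.obj M) (ω : Module.Dual ↥K (HdR.H.obj M)),
      x = Finsupp.single (σ, c • ω) 1 - Finsupp.single (σ, ω) c) ∨
  (∃ (m : ℕ), 1 ≤ m ∧ (m : ℕ∞) ≤ k ∧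
    ∃ (N' N : A) (f : N' ⟶ pow A M m) (g : pow A M m ⟶ N) (w : f ≫ g = 0),
      (ShortComplex.mk f g w).ShortExact ∧
      ∃ (s : HB.H.obj N') (ω' : Module.Dual ↥K (HdR.H.obj N)),
        x = ∑ j : Fin m,
          Finsupp.single
            (HB.H.map (f ≫ biproduct.π (fun _ : Fin m => M) j) s,
             ω'.comp (HdR.H.map (biproduct.ι (fun _ : Fin m => M) j ≫ g)).hom) 1)

/-- The submodule of relations defining `P^k(M)`. -/
noncomputable def PRelDepth (M : A) (k : ℕ∞) : Submodule ↥K (FreeModM A K HB HdR M) :=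
  Submodule.span ↥K {x | RelGenDepth A K HB HdR M k x}

/-- The space `P^k(M)` of formal periods of depth `k` of `M`; `P^∞(M)` is `PkM M ⊤`. -/
abbrev PkM (M : A) (k : ℕ∞) := FreeModM A K HB HdR M ⧸ PRelDepth A K HB HdR M k

/-- The canonical map from the free module on symbols `σ ⊗ ω` at `M` to the one on all
symbols `(σ ⊗ ω)_N`, inducing the canonical map `P^∞(M) → P(A)`. -/
noncomputable def toFree (M : A) : FreeModM A K HB HdR M →ₗ[↥K] FreeMod A K HB HdR :=
  Finsupp.lmapDomain ↥K ↥K (fun t => (⟨M, t⟩ : PIdx A K HB HdR))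

/-! A morphism `α : N ⟶ N'` gives `P(N') ⊆ P(N)` when `H_B(α)` is onto and `P(N) ⊆ P(N')` when
`H_dR(α)` is injective; moreover `P(N^d) ⊆ P(N)`. The pushout of the split epimorphism `tr` is an
epimorphism `M ⊗ X^∨ ↠ M̃`, so `P(M̃) ⊆ P(M)`. Conversely, coevaluation followed by
`M ⊗ X^∨ ⊗ X → M̃ ⊗ X` is a monomorphism `M ↪ M̃ ⊗ X`, so `P(M) ⊆ P(M̃)`. Injectivity is checked
after an exact faithful functor to modules: an element `x` of the kernel lifts, for each basis
vector `e_j` of `X`, to a trace-zero matrix `z_j` over `M_0` whose columns map under the injective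
`f` to `x ⊗ e_j`; so `z_j` has a single nonzero column `v`, independent of `j`, with `f v = x`,
and `tr z_j = v_j = 0` for all `j`. -/

lemma ModuleCat.exists_eq_of_isPushout {R : Type*} [Ring R] {X₁ X₂ X₃ X₄ : ModuleCat R}
    {t : X₁ ⟶ X₂} {l : X₁ ⟶ X₃} {r : X₂ ⟶ X₄} {b : X₃ ⟶ X₄} (h : IsPushout t l r b)
    (y : X₃) (hy : b y = 0) : ∃ z, t z = 0 ∧ l z = y := by
  obtain ⟨z, hz⟩ : ∃ z : X₁, biprod.lift t (-l) z = (biprod.inr : X₃ ⟶ X₂ ⊞ X₃) y :=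
    (ShortComplex.moduleCat_exact_iff _).1 h.exact_shortComplex _ (by
      change (biprod.inr ≫ biprod.desc r b) y = 0
      rwa [biprod.inr_desc])
  have hfst := congrArg (biprod.fst : X₂ ⊞ X₃ ⟶ X₂) hz
  have hsnd := congrArg (biprod.snd : X₂ ⊞ X₃ ⟶ X₃) hz
  simp only [← CategoryTheory.comp_apply, biprod.lift_fst, biprod.lift_snd, biprod.inr_fst,
    biprod.inr_snd] at hfst hsnd
  exact ⟨-z, by simpa using hfst, by simpa using hsnd⟩

section

variable {C : Type*} [Category C] [Preadditive C] {R : Type*} [Ring R] (F : C ⥤ ModuleCat R)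

lemma sum_map_ι_map_π_apply [F.Additive] {ι : Type} [Fintype ι] {N : ι → C} [HasBiproduct N]
    (x : F.obj (⨁ N)) : ∑ i, F.map (biproduct.ι N i) (F.map (biproduct.π N i) x) = x := by
  conv_rhs => rw [← ModuleCat.id_apply (F.obj (⨁ N)) x, ← F.map_id, ← biproduct.total (f := N),
    F.map_sum]
  simp

end

namespace Copower

variable {C : Type*} [Category C] [Abelian C]

noncomputable def trace (N : C) (d : ℕ) : (⨁ fun _ : Fin d × Fin d => N) ⟶ N :=
  biproduct.desc fun p => if p.1 = p.2 then 𝟙 N else 0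

noncomputable def column (N : C) {d : ℕ} (k : Fin d) :
    (⨁ fun _ : Fin d × Fin d => N) ⟶ pow C N d :=
  biproduct.lift fun i => biproduct.π (fun _ : Fin d × Fin d => N) (i, k)

noncomputable def columnwise {N M : C} {d : ℕ} (f : pow C N d ⟶ M) :
    (⨁ fun _ : Fin d × Fin d => N) ⟶ pow C M d :=
  biproduct.matrix fun p j => if p.2 = j then biproduct.ι (fun _ : Fin d => N) p.1 ≫ f else 0

/-- Under `M^d = M ⊗ X^∨`: the coevaluation `M → M ⊗ X^∨ ⊗ X` followed by `g ⊗ X`. -/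
noncomputable def coevComp {M P : C} {d : ℕ} (g : pow C M d ⟶ P) : M ⟶ pow C P d :=
  biproduct.lift fun j => biproduct.ι (fun _ : Fin d => M) j ≫ g

variable {N : C} {d : ℕ}

lemma ι_trace (i : Fin d) :
    biproduct.ι (fun _ : Fin d × Fin d => N) (i, i) ≫ trace N d = 𝟙 N := by
  simp only [trace, biproduct.ι_desc, ↓reduceIte]

lemma epi_trace (hd : 1 ≤ d) : Epi (trace N d) :=
  (IsSplitEpi.mk' ⟨_, ι_trace (⟨0, hd⟩ : Fin d)⟩).epi

lemma ι_column (a b k : Fin d) :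
    biproduct.ι (fun _ : Fin d × Fin d => N) (a, b) ≫ column N k =
      if b = k then biproduct.ι (fun _ : Fin d => N) a else 0 := by
  ext i
  simp only [column, Category.assoc, biproduct.lift_π, biproduct.ι_π, Prod.mk.injEq, eqToHom_refl,
    dite_eq_ite]
  split_ifs <;> simp_all

lemma trace_eq_sum_column :
    trace N d = ∑ i, column N i ≫ biproduct.π (fun _ : Fin d => N) i := by
  ext ⟨a, b⟩
  simp only [trace, biproduct.ι_desc, Preadditive.comp_sum, ← Category.assoc, ι_column]
  rw [Fintype.sum_eq_single b fun x hx => by simp [Ne.symm hx]]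
  simp [biproduct.ι_π]

lemma columnwise_π {M : C} (f : pow C N d ⟶ M) (k : Fin d) :
    columnwise f ≫ biproduct.π (fun _ : Fin d => M) k = column N k ≫ f := by
  ext ⟨a, b⟩
  simp only [columnwise, biproduct.matrix_π, biproduct.ι_desc, ← Category.assoc, ι_column]
  split_ifs <;> simp

lemma coevComp_π {M P : C} (g : pow C M d ⟶ P) (j : Fin d) :
    coevComp g ≫ biproduct.π (fun _ : Fin d => P) j = biproduct.ι (fun _ : Fin d => M) j ≫ g :=
  biproduct.lift_π _ _

variable {R : Type*} [Ring R] (F : C ⥤ ModuleCat R)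

lemma map_trace_apply [F.Additive] (z : F.obj (⨁ fun _ : Fin d × Fin d => N)) :
    F.map (trace N d) z =
      ∑ k, F.map (biproduct.π (fun _ : Fin d => N) k) (F.map (column N k) z) := by
  rw [trace_eq_sum_column, F.map_sum]
  simp only [ModuleCat.hom_sum, LinearMap.sum_apply, F.map_comp, ModuleCat.hom_comp,
    LinearMap.comp_apply]

lemma map_columnwise_apply {M : C} (f : pow C N d ⟶ M)
    (z : F.obj (⨁ fun _ : Fin d × Fin d => N)) (k : Fin d) :
    F.map (biproduct.π (fun _ : Fin d => M) k) (F.map (columnwise f) z) =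
      F.map f (F.map (column N k) z) := by
  rw [← CategoryTheory.comp_apply, ← F.map_comp, columnwise_π, F.map_comp,
    CategoryTheory.comp_apply]

lemma mono_coevComp_pushout_inr [F.Additive] [PreservesFiniteLimits F] [PreservesFiniteColimits F]
    [F.Faithful] {M0 M : C} (hd : 1 ≤ d) (f : pow C M0 d ⟶ M) [Mono f] :
    Mono (coevComp (pushout.inr (trace M0 d) (columnwise f))) := by
  refine F.mono_of_mono_map <| (ModuleCat.mono_iff_injective _).2 ?_
  rw [injective_iff_map_eq_zero]
  intro x hx
  have hker : ∀ j, F.map (pushout.inr (trace M0 d) (columnwise f))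
      (F.map (biproduct.ι (fun _ : Fin d => M) j) x) = 0 := by
    intro j
    rw [← CategoryTheory.comp_apply, ← F.map_comp, ← coevComp_π, F.map_comp,
      CategoryTheory.comp_apply, hx, map_zero]
  choose z hz_trace hz_columnwise using fun j =>
    ModuleCat.exists_eq_of_isPushout ((IsPushout.of_hasPushout _ _).map F) _ (hker j)
  have hcol : ∀ j k, F.map f (F.map (column M0 k) (z j)) = if j = k then x else 0 := by
    intro j k
    rw [← map_columnwise_apply, hz_columnwise, ← CategoryTheory.comp_apply, ← F.map_comp]
    split_ifs with hjk
    · subst hjk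
      rw [biproduct.ι_π_self, F.map_id, ModuleCat.id_apply]
    · simp [biproduct.ι_π_ne _ hjk]
  have hf : Function.Injective (F.map f) := (ModuleCat.mono_iff_injective _).1 inferInstance
  have hoff : ∀ j k, j ≠ k → F.map (column M0 k) (z j) = 0 :=
    fun j k hjk => hf (by rw [hcol, if_neg hjk, map_zero])
  set v := F.map (column M0 (⟨0, hd⟩ : Fin d)) (z ⟨0, hd⟩)
  have hdiag : ∀ j, F.map (column M0 j) (z j) = v :=
    fun j => hf (by rw [hcol, hcol, if_pos rfl, if_pos rfl])
  have hv : v = 0 := by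
    rw [← sum_map_ι_map_π_apply F v]
    refine Finset.sum_eq_zero fun i _ => ?_
    have htr := hz_trace i
    rw [map_trace_apply, Fintype.sum_eq_single i fun k hk => by
      rw [hoff i k (Ne.symm hk), map_zero], hdiag] at htr
    rw [htr, map_zero]
  have hxv : F.map f v = x := by rw [hcol, if_pos rfl]
  rw [← hxv, hv, map_zero]

end Copower

section Periods

variable {E : Type} [Field E] [Algebra ℚ E] (F : FiberFunctor A E)

instance : F.H.Additive := F.additive
instance : PreservesFiniteLimits F.H := F.exact_left
instance : PreservesFiniteColimits F.H := F.exact_right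
instance : F.H.Faithful := F.faithful

lemma mk_eq_zero_of_relGen {x : FreeMod A K HB HdR} (hx : RelGen A K HB HdR x) :
    (Submodule.Quotient.mk x : PA A K HB HdR) = 0 :=
  (Submodule.Quotient.mk_eq_zero _).2 (Submodule.subset_span hx)

lemma per_add_left (M : A) (σ σ' : HB.H.obj M) (ω : Module.Dual K (HdR.H.obj M)) :
    per A K HB HdR M (σ + σ') ω = per A K HB HdR M σ ω + per A K HB HdR M σ' ω := by
  have h := mk_eq_zero_of_relGen A K HB HdR (Or.inl ⟨M, σ, σ', ω, rfl⟩)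
  rwa [Submodule.Quotient.mk_sub, Submodule.Quotient.mk_sub, sub_sub, sub_eq_zero] at h

lemma per_sum_left (M : A) {ι : Type*} (s : Finset ι) (σ : ι → HB.H.obj M)
    (ω : Module.Dual K (HdR.H.obj M)) :
    per A K HB HdR M (∑ i ∈ s, σ i) ω = ∑ i ∈ s, per A K HB HdR M (σ i) ω :=
  map_sum (AddMonoidHom.mk' (per A K HB HdR M · ω) fun σ σ' => per_add_left A K HB HdR M σ σ' ω)
    σ s

lemma per_comp_map {M N : A} (α : M ⟶ N) (σ : HB.H.obj M) (ω : Module.Dual K (HdR.H.obj N)) :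
    per A K HB HdR M σ (ω ∘ₗ (HdR.H.map α).hom) = per A K HB HdR N (HB.H.map α σ) ω := by
  have h := mk_eq_zero_of_relGen A K HB HdR
    (Or.inr <| Or.inr <| Or.inr <| Or.inr ⟨M, N, α, σ, ω, rfl⟩)
  rwa [Submodule.Quotient.mk_sub, sub_eq_zero] at h

lemma per_mem_PM (M : A) (σ : HB.H.obj M) (ω : Module.Dual K (HdR.H.obj M)) :
    per A K HB HdR M σ ω ∈ PM A K HB HdR M :=
  Submodule.subset_span ⟨σ, ω, rfl⟩

lemma PM_le_of_epi {N M : A} (p : N ⟶ M) [Epi p] : PM A K HB HdR M ≤ PM A K HB HdR N := by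
  rw [PM, Submodule.span_le]
  rintro _ ⟨σ, ω, rfl⟩
  obtain ⟨σ', rfl⟩ := (ModuleCat.epi_iff_surjective (HB.H.map p)).1 inferInstance σ
  rw [← per_comp_map]
  exact per_mem_PM A K HB HdR N σ' _

lemma PM_le_of_mono {N M : A} (i : N ⟶ M) [Mono i] : PM A K HB HdR N ≤ PM A K HB HdR M := by
  obtain ⟨r, hr⟩ := LinearMap.exists_leftInverse_of_injective (HdR.H.map i).hom <|
    LinearMap.ker_eq_bot.2 <| (ModuleCat.mono_iff_injective (HdR.H.map i)).1 inferInstance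
  rw [PM, Submodule.span_le]
  rintro _ ⟨σ, ω, rfl⟩
  have hω : ω = (ω ∘ₗ r) ∘ₗ (HdR.H.map i).hom := by
    rw [LinearMap.comp_assoc, hr, LinearMap.comp_id]
  rw [hω, per_comp_map]
  exact per_mem_PM A K HB HdR M _ _

lemma PM_pow_le (M : A) (m : ℕ) : PM A K HB HdR (pow A M m) ≤ PM A K HB HdR M := by
  rw [PM, Submodule.span_le]
  rintro _ ⟨σ, ω, rfl⟩
  rw [← sum_map_ι_map_π_apply HB.H σ, per_sum_left]
  refine Submodule.sum_mem _ fun j _ => ?_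
  rw [← per_comp_map]
  exact per_mem_PM A K HB HdR M _ _

end Periods

/-- Fixing bases, `X = ℚ^d` and `L = ℚ^e`, so that `N ⊗ X = N^d` and `N ⊗ X ⊗ X^∨ = N^{d×d}`
(the second index being the `X^∨`-index); `tr` is the trace and `u` is `f ⊗ X^∨`. -/
theorem PM_eq_PM_pushout (M0 M1 M : A) (d e : ℕ) (hd : 1 ≤ d)
    (f : pow A M0 d ⟶ M) (g : M ⟶ pow A M1 e) (w : f ≫ g = 0)
    (hse : (ShortComplex.mk f g w).ShortExact)
    (tr : (⨁ fun _ : Fin d × Fin d => M0) ⟶ M0)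
    (htr : tr = biproduct.desc (fun p => if p.1 = p.2 then 𝟙 M0 else 0))
    (u : (⨁ fun _ : Fin d × Fin d => M0) ⟶ pow A M d)
    (hu : u = biproduct.matrix (fun p j =>
      if p.2 = j then (biproduct.ι (fun _ : Fin d => M0) p.1 ≫ f) else 0)) :
    PM A K HB HdR M = PM A K HB HdR (pushout tr u) := by
  obtain rfl : tr = Copower.trace M0 d := htr
  obtain rfl : u = Copower.columnwise f := hu
  have := hse.mono_f
  have := Copower.epi_trace (N := M0) hd
  have := Copower.mono_coevComp_pushout_inr HdR.H hd f
  apply le_antisymm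
  · calc PM A K HB HdR M
        ≤ PM A K HB HdR (pow A (pushout (Copower.trace M0 d) (Copower.columnwise f)) d) :=
          PM_le_of_mono A K HB HdR (Copower.coevComp (pushout.inr _ _))
      _ ≤ _ := PM_pow_le ..
  · calc PM A K HB HdR (pushout (Copower.trace M0 d) (Copower.columnwise f))
        ≤ PM A K HB HdR (pow A M d) := PM_le_of_epi A K HB HdR (pushout.inr _ _)
      _ ≤ _ := PM_pow_le ..
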